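/- arXiv:2309.01334 — 2 statements merged into one kernel-verified Lean document; each statement's English description precedes it below -/
import Mathlib

section
/- If Z ∈ {0,1}, e(X) = E[Z | X] with e(X) < 1 almost surely, and Y is an integrable random variable with E[Y(1-Z)·e(X)/(1-e(X))] finite, then E[Z·E[Y | X, Z=0]] = E[(e(X)/(1-e(X)))·(1-Z)·Y], where E[Y | X, Z=0] denotes a version of the conditional expectation of Y given X on the event {Z=0}. -/
/-!
Both sides equal `E[g·e]`. Since `g` and `e/(1-e)` are `m`-measurable, they can be pulled out of
the conditional expectation given `m`: `E[Z·g] = E[g·E[Z|m]] = E[g·e]`, and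
`E[(e/(1-e))·(1-Z)·Y] = E[(e/(1-e))·E[(1-Z)·Y|m]] = E[(e/(1-e))·(1-e)·g]`, where `e < 1` a.s.
lets the factor `1 - e` cancel.
-/

open MeasureTheory

section

variable {Ω : Type*} {m m0 : MeasurableSpace Ω} {μ : Measure Ω}

theorem integral_mul_condExp_of_aestronglyMeasurable (hm : m ≤ m0) [SigmaFinite (μ.trim hm)]
    {f X : Ω → ℝ} (hf : AEStronglyMeasurable[m] f μ) (hfX : Integrable (f * X) μ)
    (hX : Integrable X μ) :
    ∫ ω, f ω * (μ[X|m]) ω ∂μ = ∫ ω, f ω * X ω ∂μ := by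
  calc ∫ ω, f ω * (μ[X|m]) ω ∂μ = ∫ ω, (μ[f * X|m]) ω ∂μ :=
        integral_congr_ae (condExp_mul_of_aestronglyMeasurable_left hf hfX hX).symm
    _ = ∫ ω, f ω * X ω ∂μ := integral_condExp hm

theorem Integrable.one_sub_mul_of_forall_eq_zero_or_eq_one {Z Y : Ω → ℝ}
    (hZ01 : ∀ ω, Z ω = 0 ∨ Z ω = 1) (hZ : AEStronglyMeasurable Z μ) (hY : Integrable Y μ) :
    Integrable (fun ω => (1 - Z ω) * Y ω) μ :=
  hY.bdd_mul (c := 1) (aestronglyMeasurable_const.sub hZ) <| ae_of_all _ fun ω => by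
    rcases hZ01 ω with h | h <;> simp [h]

end

/-- Key ATT identification step: if `Z ∈ {0,1}`, `e = E[Z | X]` with `e < 1` a.s.,
and `g` is a version of `E[Y | X, Z = 0]`, i.e. an `m`-measurable function with
`E[(1-Z)·Y | X] = (1-e)·g` a.s. (where `m` is the σ-algebra generated by `X`),
then `E[Z·g] = E[(e/(1-e))·(1-Z)·Y]`. -/
theorem att_key_identification
    {Ω : Type*} {m0 : MeasurableSpace Ω} (μ : Measure Ω) [IsProbabilityMeasure μ]
    (m : MeasurableSpace Ω) (hm : m ≤ m0)
    (Z Y : Ω → ℝ) (hZ01 : ∀ ω, Z ω = 0 ∨ Z ω = 1)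
    (hZint : Integrable Z μ) (hYint : Integrable Y μ)
    (e : Ω → ℝ) (he : e = μ[Z|m]) (he1 : ∀ᵐ ω ∂μ, e ω < 1)
    (g : Ω → ℝ) (hg_meas : StronglyMeasurable[m] g)
    (hg : (μ[fun ω => (1 - Z ω) * Y ω | m]) =ᵐ[μ] fun ω => (1 - e ω) * g ω)
    (hZg : Integrable (fun ω => Z ω * g ω) μ)
    (hwY : Integrable (fun ω => (e ω / (1 - e ω)) * ((1 - Z ω) * Y ω)) μ) :
    ∫ ω, Z ω * g ω ∂μ = ∫ ω, (e ω / (1 - e ω)) * ((1 - Z ω) * Y ω) ∂μ := by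
  have he_meas : StronglyMeasurable[m] e := he ▸ stronglyMeasurable_condExp
  have hw_meas : AEStronglyMeasurable[m] (fun ω => e ω / (1 - e ω)) μ :=
    (he_meas.measurable.div (measurable_const.sub he_meas.measurable)).aestronglyMeasurable
  have hgZ : Integrable (g * Z) μ := mul_comm Z g ▸ hZg
  have h1ZY : Integrable (fun ω => (1 - Z ω) * Y ω) μ :=
    Integrable.one_sub_mul_of_forall_eq_zero_or_eq_one hZ01 hZint.aestronglyMeasurable hYint
  calc ∫ ω, Z ω * g ω ∂μ = ∫ ω, g ω * e ω ∂μ := by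
        simp only [mul_comm (Z _), he]
        exact (integral_mul_condExp_of_aestronglyMeasurable hm hg_meas.aestronglyMeasurable
          hgZ hZint).symm
    _ = ∫ ω, (e ω / (1 - e ω)) * (μ[fun ω => (1 - Z ω) * Y ω | m]) ω ∂μ := by
        refine integral_congr_ae ?_
        filter_upwards [hg, he1] with ω hgω he1ω
        have : 1 - e ω ≠ 0 := by linarith
        rw [hgω]
        field_simp
    _ = ∫ ω, (e ω / (1 - e ω)) * ((1 - Z ω) * Y ω) ∂μ :=
        integral_mul_condExp_of_aestronglyMeasurable hm hw_meas hwY h1ZY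
end

section
/- Under SUTVA (Y = Z·Y(1) + (1-Z)·Y(0)), unconfoundedness (E[Y(0) | Z=0, X] = E[Y(0) | Z=1, X]), and positivity (P(Z=1) > 0 and e(X) < 1 a.s.), the ATT satisfies τ_att = E[Y(1)-Y(0) | Z=1] = E[ZY]/E[Z] − E[w₀(X)(1-Z)Y]/E[w₀(X)(1-Z)] with w₀(X) = e(X)/(1-e(X)). -/
open MeasureTheory

/-- ATT identification. Under SUTVA (`Y = Z·Y1 + (1-Z)·Y0`), unconfoundedness
(the conditional means of `Y0` given `X` on `{Z=1}` and on `{Z=0}` coincide,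
i.e. there is an `m`-measurable `g` with `E[Z·Y0|X] = e·g` and
`E[(1-Z)·Y0|X] = (1-e)·g` a.s.), and positivity (`P(Z=1) > 0` and `e < 1` a.s.),
the ATT `τ = E[Z(Y1-Y0)]/E[Z] = E[Y1-Y0 | Z=1]` satisfies
`τ = E[ZY]/E[Z] − E[w₀(1-Z)Y]/E[w₀(1-Z)]` with `w₀ = e/(1-e)`. -/
theorem att_identification_formula
    {Ω : Type*} {m0 : MeasurableSpace Ω} (μ : Measure Ω) [IsProbabilityMeasure μ]
    (m : MeasurableSpace Ω) (hm : m ≤ m0)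
    (Z Y Y0 Y1 : Ω → ℝ) (hZ01 : ∀ ω, Z ω = 0 ∨ Z ω = 1)
    (hSUTVA : ∀ ω, Y ω = Z ω * Y1 ω + (1 - Z ω) * Y0 ω)
    (hZint : Integrable Z μ) (hYint : Integrable Y μ)
    (hY0int : Integrable Y0 μ) (hY1int : Integrable Y1 μ)
    (hZY1int : Integrable (fun ω => Z ω * Y1 ω) μ)
    (hZY0int : Integrable (fun ω => Z ω * Y0 ω) μ)
    (e : Ω → ℝ) (he : e = μ[Z|m])
    (hpos : 0 < ∫ ω, Z ω ∂μ) (he1 : ∀ᵐ ω ∂μ, e ω < 1)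
    (g : Ω → ℝ) (hg_meas : StronglyMeasurable[m] g)
    (hunconf1 : (μ[fun ω => Z ω * Y0 ω | m]) =ᵐ[μ] fun ω => e ω * g ω)
    (hunconf0 : (μ[fun ω => (1 - Z ω) * Y0 ω | m]) =ᵐ[μ] fun ω => (1 - e ω) * g ω)
    (w₀ : Ω → ℝ) (hw : ∀ ω, w₀ ω = e ω / (1 - e ω))
    (hwYint : Integrable (fun ω => w₀ ω * (1 - Z ω) * Y ω) μ)
    (hwint : Integrable (fun ω => w₀ ω * (1 - Z ω)) μ)
    (hden : ∫ ω, w₀ ω * (1 - Z ω) ∂μ ≠ 0) :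
    (∫ ω, Z ω * (Y1 ω - Y0 ω) ∂μ) / (∫ ω, Z ω ∂μ) =
      (∫ ω, Z ω * Y ω ∂μ) / (∫ ω, Z ω ∂μ) -
      (∫ ω, w₀ ω * (1 - Z ω) * Y ω ∂μ) / (∫ ω, w₀ ω * (1 - Z ω) ∂μ) := by
  -- pointwise identities from SUTVA and Z ∈ {0,1}
  have hZY : ∀ ω, Z ω * Y ω = Z ω * Y1 ω := by
    intro ω; rcases hZ01 ω with h | h <;> simp [hSUTVA ω, h]
  have hwY : ∀ ω, w₀ ω * (1 - Z ω) * Y ω = w₀ ω * ((1 - Z ω) * Y0 ω) := by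
    intro ω; rcases hZ01 ω with h | h <;> simp [hSUTVA ω, h] <;> ring
  -- measurability of e and w₀
  have he_meas : StronglyMeasurable[m] e := he ▸ stronglyMeasurable_condExp
  have hw_meas : StronglyMeasurable[m] w₀ := by
    have : w₀ = fun ω => e ω / (1 - e ω) := funext hw
    rw [this]
    exact (he_meas.measurable.div (measurable_const.sub he_meas.measurable)).stronglyMeasurable
  -- integrability of (1-Z)·Y0
  have h1ZY0int : Integrable (fun ω => (1 - Z ω) * Y0 ω) μ := by
    have := hY0int.sub hZY0int
    exact this.congr (Filter.Eventually.of_forall fun ω => by simp only [Pi.sub_apply]; ring)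
  have h1Zint : Integrable (fun ω => 1 - Z ω) μ :=
    (integrable_const (1:ℝ)).sub hZint
  -- conditional expectation of 1-Z
  have hcond1Z : (μ[fun ω => 1 - Z ω | m]) =ᵐ[μ] fun ω => 1 - e ω := by
    have h := condExp_sub (μ := μ) (m := m) (integrable_const (1:ℝ)) hZint
    have hc : (μ[fun _ : Ω => (1:ℝ) | m]) = fun _ => (1:ℝ) := condExp_const hm 1
    filter_upwards [h] with ω hω
    simp only [Pi.sub_apply] at hω
    rw [show (fun ω => 1 - Z ω) = (fun _ : Ω => (1:ℝ)) - Z from rfl, hω, hc, he]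
  -- a.e. fact: w₀ * (1 - e) = e
  have hwe : ∀ᵐ ω ∂μ, w₀ ω * (1 - e ω) = e ω := by
    filter_upwards [he1] with ω hω
    have : (1 : ℝ) - e ω ≠ 0 := by linarith
    rw [hw ω, div_mul_cancel₀ _ this]
  -- key integral 1 : ∫ Z Y0 = ∫ e g
  have key1 : ∫ ω, Z ω * Y0 ω ∂μ = ∫ ω, e ω * g ω ∂μ := by
    rw [← integral_condExp (f := fun ω => Z ω * Y0 ω) hm]
    exact integral_congr_ae hunconf1
  -- key integral 2 : ∫ w₀ (1-Z) Y0 = ∫ e g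
  have hwZY0int : Integrable (fun ω => w₀ ω * ((1 - Z ω) * Y0 ω)) μ := by
    have : (fun ω => w₀ ω * (1 - Z ω) * Y ω) = fun ω => w₀ ω * ((1 - Z ω) * Y0 ω) :=
      funext hwY
    rwa [this] at hwYint
  have key2 : ∫ ω, w₀ ω * ((1 - Z ω) * Y0 ω) ∂μ = ∫ ω, e ω * g ω ∂μ := by
    have hpull := condExp_mul_of_stronglyMeasurable_left (μ := μ) hw_meas
      (by exact hwZY0int) h1ZY0int
    have hae : (μ[w₀ * fun ω => (1 - Z ω) * Y0 ω | m]) =ᵐ[μ] fun ω => e ω * g ω := by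
      filter_upwards [hpull, hunconf0, hwe] with ω h1 h2 h3
      rw [h1, Pi.mul_apply, h2, ← mul_assoc, h3]
    calc ∫ ω, w₀ ω * ((1 - Z ω) * Y0 ω) ∂μ
        = ∫ ω, (w₀ * fun ω => (1 - Z ω) * Y0 ω) ω ∂μ := by rfl
      _ = ∫ ω, (μ[w₀ * fun ω => (1 - Z ω) * Y0 ω | m]) ω ∂μ :=
          (integral_condExp hm).symm
      _ = ∫ ω, e ω * g ω ∂μ := integral_congr_ae hae
  -- key integral 3 : ∫ w₀ (1-Z) = ∫ Z
  have key3 : ∫ ω, w₀ ω * (1 - Z ω) ∂μ = ∫ ω, Z ω ∂μ := by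
    have hpull := condExp_mul_of_stronglyMeasurable_left (μ := μ) hw_meas
      (g := fun ω => 1 - Z ω) (by exact hwint) h1Zint
    have hae : (μ[w₀ * fun ω => 1 - Z ω | m]) =ᵐ[μ] fun ω => e ω := by
      filter_upwards [hpull, hcond1Z, hwe] with ω h1 h2 h3
      rw [h1, Pi.mul_apply, h2, h3]
    calc ∫ ω, w₀ ω * (1 - Z ω) ∂μ
        = ∫ ω, (w₀ * fun ω => 1 - Z ω) ω ∂μ := by rfl
      _ = ∫ ω, (μ[w₀ * fun ω => 1 - Z ω | m]) ω ∂μ :=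
          (integral_condExp hm).symm
      _ = ∫ ω, e ω ∂μ := integral_congr_ae hae
      _ = ∫ ω, Z ω ∂μ := by rw [he]; exact integral_condExp hm
  -- combine
  have hnum : ∫ ω, w₀ ω * (1 - Z ω) * Y ω ∂μ = ∫ ω, Z ω * Y0 ω ∂μ := by
    rw [integral_congr_ae (Filter.Eventually.of_forall hwY), key2, key1]
  have hZYeq : ∫ ω, Z ω * Y ω ∂μ = ∫ ω, Z ω * Y1 ω ∂μ :=
    integral_congr_ae (Filter.Eventually.of_forall hZY)
  have hsplit : ∫ ω, Z ω * (Y1 ω - Y0 ω) ∂μ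
      = ∫ ω, Z ω * Y1 ω ∂μ - ∫ ω, Z ω * Y0 ω ∂μ := by
    rw [← integral_sub hZY1int hZY0int]
    congr 1; funext ω; ring
  rw [hsplit, hnum, key3, ← hZYeq, sub_div]
end
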